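/- arXiv:2309.00499 — 2 statements merged into one kernel-verified Lean document; each statement's English description precedes it below -/
import Mathlib

section
/- Let B be a Banach space, L the left shift on B-valued sequences, and p ≥ 0 an integer. The inductively defined norm ‖u‖_{p/2}² = Σ_{n≥0} ‖Lⁿ u‖_{(p-1)/2}² (with ‖u‖₀² = Σ_j ‖u_j‖²) is equivalent to the weighted norm Σ_{j≥0} (1+j)^p ‖u_j‖²; specifically (1/p!) Σ_j (1+j)^p ‖u_j‖² ≤ ‖u‖_{p/2}² ≤ Σ_j (1+j)^p ‖u_j‖². -/
open scoped ENNReal NNReal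

/-- The hierarchy of norms (squared) induced by the left translation on `B`-valued
sequences: `N u 0 = ∑ ‖u j‖²` and `N u (p+1) = ∑ₙ N (Lⁿ u) p`, where `(L u) j = u (j+1)`. -/
noncomputable def leftShiftNormSq {B : Type*} [NormedAddCommGroup B] :
    ℕ → (ℕ → B) → ℝ≥0∞
  | 0, u => ∑' j, (‖u j‖₊ : ℝ≥0∞) ^ 2
  | (p + 1), u => ∑' n, leftShiftNormSq p (fun j => u (n + j))

/-!
Grouping the terms of `∑ₙ ∑ⱼ (1+j)^p ‖u (n+j)‖²` along `n + j = k` gives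
`∑ₖ (∑_{j ≤ k} (1+j)^p) ‖u k‖²`, and `(1+k)^(p+1) / (p+1) ≤ ∑_{j ≤ k} (1+j)^p ≤ (1+k)^(p+1)`.
So both bounds pass from `p` to `p+1` by induction, the lower one losing a factor `p+1` at each
step, whence the `p!`.
-/

open Finset

namespace Nat

theorem sum_range_succ_one_add_pow_le (p k : ℕ) :
    ∑ j ∈ range (k + 1), (1 + j) ^ p ≤ (1 + k) ^ (p + 1) :=
  calc ∑ j ∈ range (k + 1), (1 + j) ^ p
      ≤ ∑ _j ∈ range (k + 1), (1 + k) ^ p :=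
        sum_le_sum fun j hj => Nat.pow_le_pow_left (by simp at hj; omega) p
    _ = (1 + k) ^ (p + 1) := by rw [sum_const, card_range, smul_eq_mul, pow_succ']; ring

theorem add_one_pow_succ_le (m p : ℕ) :
    (m + 1) ^ (p + 1) ≤ m ^ (p + 1) + (p + 1) * (m + 1) ^ p := by
  induction p with
  | zero => simp
  | succ p ih =>
    calc (m + 1) ^ (p + 2) = (m + 1) * (m + 1) ^ (p + 1) := by ring
      _ ≤ (m + 1) * (m ^ (p + 1) + (p + 1) * (m + 1) ^ p) := Nat.mul_le_mul_left _ ih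
      _ = m ^ (p + 2) + m ^ (p + 1) + (p + 1) * (m + 1) ^ (p + 1) := by ring
      _ ≤ m ^ (p + 2) + (m + 1) ^ (p + 1) + (p + 1) * (m + 1) ^ (p + 1) := by
        gcongr; omega
      _ = m ^ (p + 2) + (p + 2) * (m + 1) ^ (p + 1) := by ring

theorem one_add_pow_succ_le_mul_sum_range (p k : ℕ) :
    (1 + k) ^ (p + 1) ≤ (p + 1) * ∑ j ∈ range (k + 1), (1 + j) ^ p := by
  induction k with
  | zero => simp
  | succ k ih =>
    rw [sum_range_succ, Nat.mul_add]
    calc (1 + (k + 1)) ^ (p + 1) ≤ (1 + k) ^ (p + 1) + (p + 1) * (1 + (k + 1)) ^ p := by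
          simpa only [add_comm 1] using add_one_pow_succ_le (k + 1) p
      _ ≤ _ := by gcongr

end Nat

theorem ENNReal.tsum_tsum_eq_tsum_sum_antidiagonal (F : ℕ → ℕ → ℝ≥0∞) :
    ∑' n, ∑' j, F n j = ∑' k, ∑ x ∈ antidiagonal k, F x.1 x.2 := by
  rw [← ENNReal.tsum_prod, ← HasAntidiagonal.sigmaAntidiagonalEquivProd.tsum_eq,
    ENNReal.tsum_sigma']
  exact tsum_congr fun k => tsum_subtype (antidiagonal k) (fun x => F x.1 x.2)

theorem ENNReal.tsum_tsum_mul_shift (w f : ℕ → ℝ≥0∞) :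
    ∑' n, ∑' j, w j * f (n + j) = ∑' k, (∑ j ∈ range (k + 1), w j) * f k := by
  rw [ENNReal.tsum_tsum_eq_tsum_sum_antidiagonal]
  refine tsum_congr fun k => ?_
  rw [sum_mul, Nat.sum_antidiagonal_eq_sum_range_succ (fun n j => w j * f (n + j)),
    ← sum_range_reflect]
  refine sum_congr rfl fun j hj => ?_
  rw [mem_range] at hj
  congr 2 <;> omega

section

variable {B : Type*} [NormedAddCommGroup B]

noncomputable def weightedNormSq (p : ℕ) (u : ℕ → B) : ℝ≥0∞ :=
  ∑' j, ((1 + j : ℕ) : ℝ≥0∞) ^ p * (‖u j‖₊ : ℝ≥0∞) ^ 2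

theorem tsum_weightedNormSq_shift (p : ℕ) (u : ℕ → B) :
    ∑' n, weightedNormSq p (fun j => u (n + j)) =
      ∑' k, (∑ j ∈ range (k + 1), ((1 + j : ℕ) : ℝ≥0∞) ^ p) * (‖u k‖₊ : ℝ≥0∞) ^ 2 :=
  ENNReal.tsum_tsum_mul_shift (fun j => ((1 + j : ℕ) : ℝ≥0∞) ^ p) fun k => (‖u k‖₊ : ℝ≥0∞) ^ 2

theorem leftShiftNormSq_le_weightedNormSq (p : ℕ) (u : ℕ → B) :
    leftShiftNormSq p u ≤ weightedNormSq p u := by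
  induction p generalizing u with
  | zero => simp [leftShiftNormSq, weightedNormSq]
  | succ p ih =>
    calc leftShiftNormSq (p + 1) u
        ≤ ∑' n, weightedNormSq p (fun j => u (n + j)) :=
          ENNReal.tsum_le_tsum fun n => ih _
      _ = ∑' k, (∑ j ∈ range (k + 1), ((1 + j : ℕ) : ℝ≥0∞) ^ p) * (‖u k‖₊ : ℝ≥0∞) ^ 2 :=
          tsum_weightedNormSq_shift p u
      _ ≤ weightedNormSq (p + 1) u := by
          refine ENNReal.tsum_le_tsum fun k => ?_
          gcongr
          exact_mod_cast Nat.sum_range_succ_one_add_pow_le p k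

theorem weightedNormSq_le_factorial_mul_leftShiftNormSq (p : ℕ) (u : ℕ → B) :
    weightedNormSq p u ≤ p.factorial * leftShiftNormSq p u := by
  induction p generalizing u with
  | zero => simp [leftShiftNormSq, weightedNormSq]
  | succ p ih =>
    calc weightedNormSq (p + 1) u
        ≤ ∑' k, ((p + 1 : ℕ) : ℝ≥0∞) *
            ((∑ j ∈ range (k + 1), ((1 + j : ℕ) : ℝ≥0∞) ^ p) * (‖u k‖₊ : ℝ≥0∞) ^ 2) := by
          refine ENNReal.tsum_le_tsum fun k => ?_
          rw [← mul_assoc]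
          gcongr
          exact_mod_cast Nat.one_add_pow_succ_le_mul_sum_range p k
      _ = (p + 1 : ℕ) * ∑' n, weightedNormSq p (fun j => u (n + j)) := by
          rw [ENNReal.tsum_mul_left, tsum_weightedNormSq_shift]
      _ ≤ (p + 1 : ℕ) * ∑' n, (p.factorial * leftShiftNormSq p (fun j => u (n + j))) := by
          gcongr with n
          exact ih _
      _ = (p + 1).factorial * leftShiftNormSq (p + 1) u := by
          rw [ENNReal.tsum_mul_left, ← mul_assoc, Nat.factorial_succ, Nat.cast_mul]
          rfl

end

/-- Equivalence of the inductively defined norm with the polynomially weighted `ℓ²` norm: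
`(1/p!) ∑_j (1+j)^p ‖u_j‖² ≤ ‖u‖²_{p/2} ≤ ∑_j (1+j)^p ‖u_j‖²` (in the extended reals). -/
theorem leftShiftNormSq_equiv_weighted {B : Type*} [NormedAddCommGroup B]
    (p : ℕ) (u : ℕ → B) :
    (p.factorial : ℝ≥0∞)⁻¹ * ∑' j, ((1 + j : ℕ) : ℝ≥0∞) ^ p * (‖u j‖₊ : ℝ≥0∞) ^ 2 ≤
        leftShiftNormSq p u ∧
      leftShiftNormSq p u ≤ ∑' j, ((1 + j : ℕ) : ℝ≥0∞) ^ p * (‖u j‖₊ : ℝ≥0∞) ^ 2 :=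
  ⟨(ENNReal.inv_mul_le_iff (by simp [Nat.factorial_ne_zero]) (by simp)).2
      (weightedNormSq_le_factorial_mul_leftShiftNormSq p u),
    leftShiftNormSq_le_weightedNormSq p u⟩
end

section
/- Let L be the left shift operator on complex sequences, a ∈ l², c ∈ l^{2,1} (meaning Σ_j (1+j)² |c_j|² < ∞), and λ ∈ ℂ with |λ| ≥ 1. If (λ − L)a = c, then there exists a constant M > 0, independent of λ, such that ‖a‖_{l²} ≤ M ‖c‖_{l^{2,1}}. -/
/-!
Since `‖λ‖ ≥ 1`, the equation gives `‖a j‖ ≤ ‖a (j + 1)‖ + ‖c j‖`, hence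
`‖a j‖² - ‖a (j + 1)‖² ≤ 2 ‖c j‖ ‖a j‖`. As `a ∈ l²` tends to zero, telescoping yields
`‖a j‖² ≤ 2 ∑_{k ≥ j} ‖c k‖ ‖a k‖`, and summing over `j` (a discrete Hardy inequality)
`‖a‖² ≤ 2 ∑_k (k + 1) ‖c k‖ ‖a k‖ ≤ 2 ‖c‖²_{l^{2,1}} + ‖a‖² / 2`.
Absorbing the last term, which is finite, gives the estimate with `M = 2`.
-/

open Filter Topology Finset
open scoped ENNReal NNReal

namespace ENNReal

theorem two_mul_le_add_sq (a b : ℝ≥0∞) : 2 * a * b ≤ a ^ 2 + b ^ 2 := by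
  rcases eq_or_ne a ∞ with rfl | ha
  · simp
  rcases eq_or_ne b ∞ with rfl | hb
  · simp
  lift a to ℝ≥0 using ha
  lift b to ℝ≥0 using hb
  exact_mod_cast _root_.two_mul_le_add_sq a b

theorem sq_le_sq_add_two_mul_of_le_add {b b' x : ℝ≥0∞} (h : b ≤ b' + x) :
    b ^ 2 ≤ b' ^ 2 + 2 * x * b := by
  rcases le_total b b' with hb | hb
  · exact (pow_le_pow_left' hb 2).trans le_self_add
  · calc b ^ 2 = b * b := sq b
      _ ≤ (b' + x) * b := by gcongr
      _ = b' * b + x * b := add_mul _ _ _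
      _ ≤ b' * (b' + x) + x * b := by gcongr
      _ = b' ^ 2 + x * b' + x * b := by ring
      _ ≤ b' ^ 2 + x * b + x * b := by gcongr
      _ = b' ^ 2 + 2 * x * b := by ring

theorem tsum_tsum_nat_add (g : ℕ → ℝ≥0∞) :
    ∑' j, ∑' k, g (j + k) = ∑' n, (n + 1) * g n := by
  rw [← ENNReal.tsum_prod (f := fun j k => g (j + k)),
    ← HasAntidiagonal.sigmaAntidiagonalEquivProd.tsum_eq, ENNReal.tsum_sigma']
  refine tsum_congr fun n => ?_
  have hfiber : ∀ p : antidiagonal n, g (p.1.1 + p.1.2) = g n := fun p => by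
    rw [mem_antidiagonal.1 p.2]
  simp [HasAntidiagonal.sigmaAntidiagonalEquivProd, hfiber]

theorem le_tsum_nat_add_of_le_succ_add {u f : ℕ → ℝ≥0∞} (hu : ∀ j, u j ≤ u (j + 1) + f j)
    (hu0 : Tendsto u atTop (𝓝 0)) (j : ℕ) : u j ≤ ∑' k, f (j + k) := by
  have telescoped : ∀ N, u j ≤ u (j + N) + ∑ k ∈ range N, f (j + k) := by
    intro N
    induction N with
    | zero => simp
    | succ N ih =>
      rw [sum_range_succ, ← add_assoc, add_right_comm]
      exact ih.trans (by gcongr; exact hu _)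
  have hlim : Tendsto (fun N => u (j + N) + ∑' k, f (j + k)) atTop (𝓝 (0 + ∑' k, f (j + k))) :=
    (((tendsto_add_atTop_iff_nat j).2 hu0).congr fun N => by rw [add_comm]).add tendsto_const_nhds
  rw [zero_add] at hlim
  exact ge_of_tendsto' hlim fun N => (telescoped N).trans (by gcongr; exact ENNReal.sum_le_tsum _)

theorem tsum_sq_le_four_mul_tsum_sq_of_le_succ_add {b x : ℕ → ℝ≥0∞}
    (hbx : ∀ j, b j ≤ b (j + 1) + x j) (hb : ∑' j, b j ^ 2 ≠ ∞) :
    ∑' j, b j ^ 2 ≤ 4 * ∑' j, ((j + 1) * x j) ^ 2 := by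
  have tails : ∀ j, b j ^ 2 ≤ ∑' k, 2 * x (j + k) * b (j + k) :=
    le_tsum_nat_add_of_le_succ_add (fun j => sq_le_sq_add_two_mul_of_le_add (hbx j))
      (ENNReal.tendsto_atTop_zero_of_tsum_ne_top hb)
  have absorb : ∑' j, b j ^ 2 + ∑' j, b j ^ 2 ≤ 4 * ∑' j, ((j + 1) * x j) ^ 2 + ∑' j, b j ^ 2 :=
    calc ∑' j, b j ^ 2 + ∑' j, b j ^ 2
        = 2 * ∑' j, b j ^ 2 := (two_mul _).symm
      _ ≤ 2 * ∑' j, ∑' k, 2 * x (j + k) * b (j + k) := by gcongr; exact tails _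
      _ = ∑' n, 2 * (2 * (n + 1) * x n) * b n := by
        rw [tsum_tsum_nat_add fun n => 2 * x n * b n, ← ENNReal.tsum_mul_left]
        exact tsum_congr fun n => by ring
      _ ≤ ∑' n, ((2 * (n + 1) * x n) ^ 2 + b n ^ 2) := by gcongr; exact two_mul_le_add_sq _ _
      _ = 4 * ∑' j, ((j + 1) * x j) ^ 2 + ∑' j, b j ^ 2 := by
        rw [ENNReal.tsum_add, ← ENNReal.tsum_mul_left]
        exact congrArg₂ _ (tsum_congr fun n => by ring) rfl
  exact ENNReal.le_of_add_le_add_right hb absorb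

end ENNReal

theorem norm_le_norm_add_norm_of_mul_sub_eq {𝕜 : Type*} [NormedDivisionRing 𝕜] {lam a a' c : 𝕜}
    (hlam : 1 ≤ ‖lam‖) (h : lam * a - a' = c) : ‖a‖ ≤ ‖a'‖ + ‖c‖ :=
  calc ‖a‖ ≤ ‖lam‖ * ‖a‖ := le_mul_of_one_le_left (norm_nonneg _) hlam
    _ = ‖a' + c‖ := by rw [← norm_mul, ← h, add_sub_cancel]
    _ ≤ ‖a'‖ + ‖c‖ := norm_add_le _ _

theorem Real.tsum_sq_le_four_mul_tsum_sq_of_le_succ_add {b x : ℕ → ℝ} (hb0 : ∀ j, 0 ≤ b j)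
    (hx0 : ∀ j, 0 ≤ x j) (hbx : ∀ j, b j ≤ b (j + 1) + x j) (hb : Summable fun j => b j ^ 2)
    (hx : Summable fun j : ℕ => (1 + (j : ℝ)) ^ 2 * x j ^ 2) :
    ∑' j, b j ^ 2 ≤ 4 * ∑' j : ℕ, (1 + (j : ℝ)) ^ 2 * x j ^ 2 := by
  have hbx' : ∀ j, ENNReal.ofReal (b j) ≤ ENNReal.ofReal (b (j + 1)) + ENNReal.ofReal (x j) :=
    fun j => by rw [← ENNReal.ofReal_add (hb0 _) (hx0 _)]; exact ENNReal.ofReal_le_ofReal (hbx j)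
  have hsq : ∑' j, ENNReal.ofReal (b j) ^ 2 = ENNReal.ofReal (∑' j, b j ^ 2) := by
    simp_rw [← ENNReal.ofReal_pow (hb0 _)]
    exact (ENNReal.ofReal_tsum_of_nonneg (fun j => sq_nonneg _) hb).symm
  have hweight : ∑' j : ℕ, ((j + 1) * ENNReal.ofReal (x j)) ^ 2
      = ENNReal.ofReal (∑' j : ℕ, (1 + (j : ℝ)) ^ 2 * x j ^ 2) := by
    rw [ENNReal.ofReal_tsum_of_nonneg (fun j => by positivity) hx]
    refine tsum_congr fun j => ?_
    rw [ENNReal.ofReal_mul (by positivity), ENNReal.ofReal_pow (by positivity),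
      ENNReal.ofReal_pow (hx0 j), mul_pow, ENNReal.ofReal_add zero_le_one (Nat.cast_nonneg j),
      ENNReal.ofReal_one, ENNReal.ofReal_natCast, add_comm]
  have key := ENNReal.tsum_sq_le_four_mul_tsum_sq_of_le_succ_add hbx'
    (hsq ▸ ENNReal.ofReal_ne_top)
  rw [hsq, hweight, ← ENNReal.ofReal_ofNat 4, ← ENNReal.ofReal_mul (by norm_num)] at key
  exact (ENNReal.ofReal_le_ofReal_iff (by positivity)).1 key

/-- Resolvent estimate for the left translation on `l²(ℕ; ℂ)` up to the unit circle:
there is `M > 0` independent of `λ` such that if `|λ| ≥ 1`, `a ∈ l²`, `c ∈ l^{2,1}` and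
`(λ − L)a = c`, then `‖a‖_{l²} ≤ M ‖c‖_{l^{2,1}}`. -/
theorem left_shift_resolvent_estimate :
    ∃ M : ℝ, 0 < M ∧
      ∀ (lam : ℂ), 1 ≤ ‖lam‖ →
        ∀ a c : ℕ → ℂ,
          Summable (fun j => ‖a j‖ ^ 2) →
          Summable (fun j : ℕ => (1 + (j : ℝ)) ^ 2 * ‖c j‖ ^ 2) →
          (∀ j, lam * a j - a (j + 1) = c j) →
          Real.sqrt (∑' j, ‖a j‖ ^ 2) ≤
            M * Real.sqrt (∑' j : ℕ, (1 + (j : ℝ)) ^ 2 * ‖c j‖ ^ 2) := by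
  refine ⟨2, two_pos, fun lam hlam a c ha hc hrec => ?_⟩
  have hardy := Real.tsum_sq_le_four_mul_tsum_sq_of_le_succ_add (fun j => norm_nonneg (a j))
    (fun j => norm_nonneg (c j)) (fun j => norm_le_norm_add_norm_of_mul_sub_eq hlam (hrec j)) ha hc
  calc Real.sqrt (∑' j, ‖a j‖ ^ 2)
      ≤ Real.sqrt (2 ^ 2 * ∑' j : ℕ, (1 + (j : ℝ)) ^ 2 * ‖c j‖ ^ 2) :=
        Real.sqrt_le_sqrt (by norm_num [hardy])
    _ = 2 * Real.sqrt (∑' j : ℕ, (1 + (j : ℝ)) ^ 2 * ‖c j‖ ^ 2) := by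
        rw [Real.sqrt_mul (by norm_num), Real.sqrt_sq zero_le_two]
end
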